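/- arXiv:0709.1787 — 2 statements merged into one kernel-verified Lean document; each statement's English description precedes it below -/
import Mathlib

section
/- For every finite simple graph $G$ on $n \ge 1$ vertices and every integer $k \ge 1$, $\nu(G, \mathcal{C}_k) \ge \nu(G, \mathcal{F}) - (k+1)^{-1}$, where $\nu(G,\Gamma) = N(G,\Gamma)/n$. That is, $N(G, \mathcal{C}_k) \ge N(G, \mathcal{F}) - n/(k+1)$. -/
/-!
Take a largest set `S` inducing a forest. A set `B ⊆ S` is pendant at `u ∈ B` when every edge
of `G[S]` leaving `B` starts at `u`; a component with more than `k` vertices is pendant at any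
of its vertices. In a forest a component `C` of `G[B \ {u}]` contains at most one neighbour of
`u` (two would close a cycle through `u`), so `C` is itself pendant. Hence an inclusion-minimal
pendant set `B` with `|B| ≥ k + 1` has all components of `G[B \ {u}]` of size at most `k`,
so deleting `u` alone settles all of `B`, at least `k + 1` vertices. Recursing on `S \ B`
therefore deletes at most `|S| / (k + 1)` vertices.
-/

open SimpleGraph

/-- `N(G, 𝒞_k)`: the largest size of a vertex set `S` such that every connected component
of the induced subgraph `G[S]` has at most `k` vertices. -/
noncomputable def NC {V : Type*} [Fintype V] (G : SimpleGraph V) (k : ℕ) : ℕ :=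
  sSup {m | ∃ S : Set V, m = S.ncard ∧
    ∀ v : S, (((G.induce S).connectedComponentMk v).supp).ncard ≤ k}

/-- `N(G, ℱ)`: the largest size of a vertex set `S` such that the induced subgraph `G[S]`
is a forest (acyclic). -/
noncomputable def NF {V : Type*} [Fintype V] (G : SimpleGraph V) : ℕ :=
  sSup {m | ∃ S : Set V, m = S.ncard ∧ (G.induce S).IsAcyclic}

namespace SimpleGraph

variable {V : Type*} {G H : SimpleGraph V} {S T X B : Set V} {u v w x y : V}

/-- `G[S]` kept on the vertex type `V`, so that induced subgraphs on different sets can be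
compared; vertices outside `S` are isolated. -/
def restrict (H : SimpleGraph V) (S : Set V) : SimpleGraph V where
  Adj x y := H.Adj x y ∧ x ∈ S ∧ y ∈ S
  symm := ⟨fun _ _ h => ⟨h.1.symm, h.2.2, h.2.1⟩⟩
  loopless := ⟨fun x h => H.loopless.irrefl x h.1⟩

@[simp]
lemma restrict_adj : (H.restrict S).Adj x y ↔ H.Adj x y ∧ x ∈ S ∧ y ∈ S := Iff.rfl

lemma restrict_le : H.restrict S ≤ H := fun _ _ h => h.1

lemma restrict_mono (h : S ⊆ T) : H.restrict S ≤ H.restrict T :=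
  fun _ _ hxy => ⟨hxy.1, h hxy.2.1, h hxy.2.2⟩

lemma restrict_restrict_of_subset (h : T ⊆ S) : (H.restrict S).restrict T = H.restrict T := by
  ext x y
  simp only [restrict_adj]
  exact ⟨fun hxy => ⟨hxy.1.1, hxy.2⟩, fun hxy => ⟨⟨hxy.1, h hxy.2.1, h hxy.2.2⟩, hxy.2⟩⟩

lemma Walk.support_subset_of_restrict {a b : V} (p : (H.restrict S).Walk a b) (ha : a ∈ S) :
    ∀ c ∈ p.support, c ∈ S := by
  induction p with
  | nil => simpa using ha
  | cons h p ih =>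
    simp only [Walk.support_cons, List.mem_cons, forall_eq_or_imp]
    exact ⟨ha, ih h.2.2⟩

/-- The vertex set of the component of `v` in `H[S]`; it is `{v}` when `v ∉ S`. -/
def componentIn (H : SimpleGraph V) (S : Set V) (v : V) : Set V :=
  {u | (H.restrict S).Reachable v u}

lemma mem_componentIn_self : v ∈ H.componentIn S v := Reachable.refl v

lemma componentIn_subset (hv : v ∈ S) : H.componentIn S v ⊆ S :=
  fun _ ⟨p⟩ => Walk.support_subset_of_restrict p hv _ p.end_mem_support

lemma componentIn_restrict_of_subset (h : T ⊆ S) :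
    (H.restrict S).componentIn T v = H.componentIn T v := by
  rw [componentIn, restrict_restrict_of_subset h, componentIn]

lemma componentIn_subset_of_closed (hX : ∀ a ∈ X, ∀ b, (H.restrict S).Adj a b → b ∈ X)
    (hw : w ∈ X) : H.componentIn S w ⊆ H.componentIn X w := by
  have key : ∀ {a b : V} (p : (H.restrict S).Walk a b), a ∈ X → (H.restrict X).Reachable a b := by
    intro a b p
    induction p with
    | nil => exact fun _ => Reachable.refl _
    | cons h _ ih =>
      intro ha
      have hc := hX _ ha _ h
      exact (show (H.restrict X).Adj _ _ from ⟨h.1, ha, hc⟩).reachable.trans (ih hc)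
  exact fun _ ⟨p⟩ => key p hw

lemma image_val_supp_connectedComponentMk_induce (v : T) :
    Subtype.val '' ((G.induce T).connectedComponentMk v).supp = G.componentIn T v := by
  ext u
  simp only [Set.mem_image, ConnectedComponent.mem_supp_iff, ConnectedComponent.eq]
  constructor
  · rintro ⟨w, hw, rfl⟩
    exact hw.symm.map (⟨Subtype.val, fun {a b} h => ⟨h, a.2, b.2⟩⟩ : G.induce T →g G.restrict T)
  · rintro ⟨p⟩
    have hp := Walk.support_subset_of_restrict p v.2
    refine ⟨⟨u, hp u p.end_mem_support⟩, ?_, rfl⟩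
    exact ⟨((p.mapLe restrict_le).induce T
      (by simpa only [Walk.support_mapLe_eq_support] using hp)).reverse⟩

lemma ncard_supp_connectedComponentMk_induce (v : T) :
    ((G.induce T).connectedComponentMk v).supp.ncard = (G.componentIn T v).ncard := by
  rw [← image_val_supp_connectedComponentMk_induce, Set.ncard_image_of_injective _
    Subtype.val_injective]

lemma IsAcyclic.restrict_of_induce (h : (G.induce S).IsAcyclic) : (G.restrict S).IsAcyclic := by
  intro u c hc
  have hu : u ∈ S := by
    cases c with
    | nil => exact absurd hc Walk.not_isCycle_nil
    | cons h _ => exact h.2.1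
  have hle : G.restrict S ≤ G := restrict_le
  have hcS : ∀ x ∈ (c.mapLe hle).support, x ∈ S := by
    simpa only [Walk.support_mapLe_eq_support] using Walk.support_subset_of_restrict c hu
  refine h ((c.mapLe hle).induce S hcS) ((Walk.isCycle_map_iff_of_injective
    (f := (Embedding.induce S).toHom) Subtype.val_injective).1 ?_)
  rw [Walk.map_induce (c.mapLe hle) hcS]
  exact hc.mapLe hle

/-- The edge `ux` of a forest is a bridge, but `u - y ⋯ x` would avoid it. -/
lemma IsAcyclic.not_reachable_restrict (hH : H.IsAcyclic) (hux : H.Adj u x) (huy : H.Adj u y)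
    (hxy : x ≠ y) (hu : u ∉ S) : ¬ (H.restrict S).Reachable x y := by
  intro hreach
  have hle : H.restrict S ≤ H.deleteEdges {s(u, x)} := by
    intro a b hab
    refine deleteEdges_adj.2 ⟨hab.1, fun he => ?_⟩
    rcases Sym2.eq_iff.1 (Set.mem_singleton_iff.1 he) with ⟨rfl, -⟩ | ⟨-, rfl⟩
    · exact hu hab.2.1
    · exact hu hab.2.2
  have huy' : (H.deleteEdges {s(u, x)}).Adj u y := by
    refine deleteEdges_adj.2 ⟨huy, fun he => ?_⟩
    rcases Sym2.eq_iff.1 (Set.mem_singleton_iff.1 he) with ⟨-, rfl⟩ | ⟨rfl, -⟩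
    · exact hxy rfl
    · exact hux.ne rfl
  exact isAcyclic_iff_forall_adj_isBridge.1 hH hux (huy'.reachable.trans (hreach.symm.mono hle))

structure IsPendantAt (H : SimpleGraph V) (S B : Set V) (u : V) : Prop where
  subset : B ⊆ S
  mem : u ∈ B
  closed : ∀ a ∈ B, a ≠ u → ∀ b, (H.restrict S).Adj a b → b ∈ B

lemma isPendantAt_componentIn (hv : v ∈ S) : H.IsPendantAt S (H.componentIn S v) v where
  subset := componentIn_subset hv
  mem := mem_componentIn_self
  closed _ ha _ _ hab := Reachable.trans ha hab.reachable

lemma IsAcyclic.exists_isPendantAt_componentIn (hH : H.IsAcyclic) (hB : H.IsPendantAt S B u)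
    (hw : w ∈ B \ {u}) : ∃ x, H.IsPendantAt S (H.componentIn (B \ {u}) w) x := by
  set C := H.componentIn (B \ {u}) w
  have hCB : C ⊆ B \ {u} := componentIn_subset hw
  have hCS : C ⊆ S := hCB.trans (Set.sdiff_subset.trans hB.subset)
  have hexit : ∀ a ∈ C, ∀ b, (H.restrict S).Adj a b → b ∈ C ∨ b = u := by
    intro a ha b hab
    have hb : b ∈ B := hB.closed a (hCB ha).1 (hCB ha).2 b hab
    by_cases hbu : b = u
    · exact Or.inr hbu
    · exact Or.inl (Reachable.trans ha (show (H.restrict (B \ {u})).Adj a b from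
        ⟨hab.1, hCB ha, hb, hbu⟩).reachable)
  have hunique : ∀ a ∈ C, ∀ a' ∈ C, H.Adj u a → H.Adj u a' → a = a' := by
    intro a ha a' ha' hua hua'
    by_contra hne
    exact hH.not_reachable_restrict hua hua' hne (fun h => h.2 rfl)
      (Reachable.trans (Reachable.symm ha) ha')
  by_cases hx : ∃ x ∈ C, H.Adj u x
  · obtain ⟨x, hxC, hux⟩ := hx
    refine ⟨x, hCS, hxC, fun a ha hax b hab => ?_⟩
    rcases hexit a ha b hab with hb | rfl
    · exact hb
    · exact absurd (hunique x hxC a ha hux hab.1.symm) (Ne.symm hax)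
  · refine ⟨w, hCS, mem_componentIn_self, fun a ha _ b hab => ?_⟩
    rcases hexit a ha b hab with hb | rfl
    · exact hb
    · exact absurd ⟨a, ha, hab.1.symm⟩ hx

lemma IsAcyclic.exists_isPendantAt_ncard_componentIn_le [Finite V] (hH : H.IsAcyclic) (k : ℕ)
    (hB : H.IsPendantAt S B u) (hk : k + 1 ≤ B.ncard) :
    ∃ u' B', H.IsPendantAt S B' u' ∧ k + 1 ≤ B'.ncard ∧
      ∀ w ∈ B' \ {u'}, (H.componentIn (B' \ {u'}) w).ncard ≤ k := by
  obtain ⟨B', ⟨u', hB', hk'⟩, hmin⟩ := exists_minimal_of_wellFoundedLT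
    (fun B' => ∃ u', H.IsPendantAt S B' u' ∧ k + 1 ≤ B'.ncard) ⟨B, u, hB, hk⟩
  refine ⟨u', B', hB', hk', fun w hw => ?_⟩
  by_contra! hbig
  obtain ⟨x, hx⟩ := hH.exists_isPendantAt_componentIn hB' hw
  have hsub : H.componentIn (B' \ {u'}) w ⊆ B' \ {u'} := componentIn_subset hw
  exact (hsub (hmin ⟨x, hx, hbig⟩ (hsub.trans Set.sdiff_subset) hB'.mem)).2 rfl

lemma IsPendantAt.ncard_componentIn_union_le [Finite V] {k : ℕ} (hB : H.IsPendantAt S B u)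
    (hT : T ⊆ S \ B) (hTk : ∀ v ∈ T, (H.componentIn T v).ncard ≤ k)
    (hBk : ∀ v ∈ B \ {u}, (H.componentIn (B \ {u}) v).ncard ≤ k) :
    ∀ v ∈ T ∪ B \ {u}, (H.componentIn (T ∪ B \ {u}) v).ncard ≤ k := by
  have hTBS : T ∪ B \ {u} ⊆ S :=
    Set.union_subset (hT.trans Set.sdiff_subset) (Set.sdiff_subset.trans hB.subset)
  rintro v (hv | hv)
  · refine (Set.ncard_le_ncard (componentIn_subset_of_closed ?_ hv)).trans (hTk v hv)
    intro a ha b hab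
    rcases hab.2.2 with hb | hb
    · exact hb
    · exact absurd (hB.closed b hb.1 hb.2 a (restrict_mono hTBS hab.symm)) (hT ha).2
  · refine (Set.ncard_le_ncard (componentIn_subset_of_closed ?_ hv)).trans (hBk v hv)
    intro a ha b hab
    have hbB : b ∈ B := hB.closed a ha.1 ha.2 b (restrict_mono hTBS hab)
    rcases hab.2.2 with hb | hb
    · exact absurd hbB (hT hb).2
    · exact hb

theorem IsAcyclic.exists_subset_ncard_componentIn_le [Finite V] (hH : H.IsAcyclic) (k : ℕ)
    (S : Set V) : ∃ T ⊆ S, (k + 1) * (S.ncard - T.ncard) ≤ S.ncard ∧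
      ∀ v ∈ T, (H.componentIn T v).ncard ≤ k := by
  induction hm : S.ncard using Nat.strong_induction_on generalizing S with
  | _ m ih =>
  subst hm
  by_cases hsmall : ∀ v ∈ S, (H.componentIn S v).ncard ≤ k
  · exact ⟨S, subset_rfl, by simp, hsmall⟩
  push Not at hsmall
  obtain ⟨v, hv, hbig⟩ := hsmall
  obtain ⟨u, B, hB, hBk, hcomp⟩ :=
    hH.exists_isPendantAt_ncard_componentIn_le k (isPendantAt_componentIn hv) hbig
  have hSB : (S \ B).ncard + B.ncard = S.ncard := Set.ncard_sdiff_add_ncard_of_subset hB.subset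
  obtain ⟨T, hT, hTcard, hTk⟩ := ih _ (by omega) (S \ B) rfl
  have hdisj : Disjoint T (B \ {u}) := Set.disjoint_left.2 fun _ ha hb => (hT ha).2 hb.1
  have hTB : (T ∪ B \ {u}).ncard = T.ncard + (B.ncard - 1) := by
    rw [Set.ncard_union_eq hdisj, Set.ncard_sdiff_singleton_of_mem hB.mem]
  have hTle : T.ncard ≤ (S \ B).ncard := Set.ncard_le_ncard hT
  refine ⟨T ∪ B \ {u}, Set.union_subset (hT.trans Set.sdiff_subset)
    (Set.sdiff_subset.trans hB.subset), ?_, hB.ncard_componentIn_union_le hT hTk hcomp⟩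
  have hdel : S.ncard - (T ∪ B \ {u}).ncard = ((S \ B).ncard - T.ncard) + 1 := by omega
  rw [hdel, mul_add, mul_one]
  omega

end SimpleGraph

lemma bddAbove_setOf_ncard {V : Type*} [Finite V] (p : Set V → Prop) :
    BddAbove {m | ∃ S : Set V, m = S.ncard ∧ p S} := by
  refine ⟨Nat.card V, ?_⟩
  rintro _ ⟨S, rfl, -⟩
  exact Set.ncard_le_card S

lemma exists_isAcyclic_ncard_eq_NF {V : Type*} [Fintype V] (G : SimpleGraph V) :
    ∃ S : Set V, (G.induce S).IsAcyclic ∧ S.ncard = NF G := by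
  have hmem : NF G ∈ {m | ∃ S : Set V, m = S.ncard ∧ (G.induce S).IsAcyclic} :=
    Nat.sSup_mem ⟨0, ∅, by simp, IsAcyclic.of_subsingleton⟩ (bddAbove_setOf_ncard _)
  obtain ⟨S, hNF, hS⟩ := hmem
  exact ⟨S, hS, hNF.symm⟩

lemma ncard_le_NC {V : Type*} [Fintype V] {G : SimpleGraph V} {k : ℕ} {T : Set V}
    (hT : ∀ v ∈ T, (G.componentIn T v).ncard ≤ k) : T.ncard ≤ NC G k := by
  refine le_csSup (bddAbove_setOf_ncard _) ⟨T, rfl, fun v => ?_⟩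
  rw [ncard_supp_connectedComponentMk_induce]
  exact hT v v.2

theorem NC_ge_NF_sub_general {V : Type*} [Fintype V] (G : SimpleGraph V)
    (n : ℕ) (hn : n = Fintype.card V) (k : ℕ) :
    (NF G : ℝ) - n / (k + 1) ≤ NC G k := by
  obtain ⟨S, hS, hSNF⟩ := exists_isAcyclic_ncard_eq_NF G
  obtain ⟨T, hTS, hdel, hT⟩ := hS.restrict_of_induce.exists_subset_ncard_componentIn_le k S
  have hTNC : T.ncard ≤ NC G k :=
    ncard_le_NC fun v hv => componentIn_restrict_of_subset hTS ▸ hT v hv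
  have hSn : S.ncard ≤ n := by
    rw [hn, ← Nat.card_eq_fintype_card]
    exact Set.ncard_le_card S
  have hdel' : ((k : ℝ) + 1) * (S.ncard - T.ncard) ≤ n := by
    have h := (Nat.cast_le (α := ℝ)).2 (hdel.trans hSn)
    push_cast [Nat.cast_sub (Set.ncard_le_ncard hTS)] at h
    exact h
  have hST : (S.ncard : ℝ) - T.ncard ≤ n / (k + 1) := by
    rw [le_div_iff₀ (by positivity)]
    linarith
  rw [← hSNF]
  linarith [(Nat.cast_le (α := ℝ)).2 hTNC]

/-- For every finite simple graph `G` on `n ≥ 1` vertices and every `k ≥ 1`,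
`N(G, 𝒞_k) ≥ N(G, ℱ) - n/(k+1)`. -/
theorem NC_ge_NF_sub {V : Type*} [Fintype V] (G : SimpleGraph V)
    (n : ℕ) (hn : n = Fintype.card V) (hn1 : 1 ≤ n) (k : ℕ) (hk : 1 ≤ k) :
    (NF G : ℝ) - n / (k + 1) ≤ NC G k :=
  NC_ge_NF_sub_general G n hn k
end

section
/- Let $c > 0$ and $\epsilon > 0$. There exists $\delta > 0$ such that for all sufficiently large $n$ and every integer $t$ with $1 \le t \le \delta n$, the probability that the Erdős–Rényi random graph $G \in \mathcal{G}(n, c/n)$ contains a vertex set $T$ with $|T| = t$ spanning at least $(1+\epsilon/4)t$ edges is at most $\exp\{-\epsilon t \log(n/t) / 8\}$. -/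
/-! A `t`-set spanning at least `k` edges contains `k` specified present edges, so a union bound
over the `C(n, t) · C(C(t, 2), k)` choices bounds the probability by
`(e n / t) ^ t · (e c t / n) ^ k = exp (t (1 + L) + k (1 + log c - L))` with `L = log (n / t)`.
For `k ≥ (1 + ε / 4) t` the second factor wins once `L` exceeds a constant depending on `c` and
`ε`, and `t ≤ δ n` with `δ = exp (-constant)` guarantees exactly that. -/

open SimpleGraph Filter

/-- The probability, in the Erdős–Rényi model `𝒢(n, p)` (each of the `n.choose 2` possible
edges present independently with probability `p`), that the random graph lies in the set
`A` of graphs on `{1, …, n}`. -/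
noncomputable def erProb (n : ℕ) (p : ℝ) (A : Set (SimpleGraph (Fin n))) : ℝ :=
  ∑ G : SimpleGraph (Fin n),
    A.indicator (fun G => p ^ G.edgeSet.ncard * (1 - p) ^ (n.choose 2 - G.edgeSet.ncard)) G

open Finset Real

theorem Finset.sum_Icc_pow_mul_pow {α R : Type*} [DecidableEq α] [CommSemiring R]
    {s t : Finset α} (h : s ⊆ t) (a b : R) :
    ∑ u ∈ Icc s t, a ^ #u * b ^ (#t - #u) = a ^ #s * (a + b) ^ (#t - #s) := by
  have disj {u} (hu : u ∈ (t \ s).powerset) : Disjoint u s :=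
    disjoint_of_subset_left (mem_powerset.1 hu) sdiff_disjoint
  rw [Icc_eq_image_powerset h, sum_image fun u hu v hv huv => ?_, ← card_sdiff_of_subset h,
    ← sum_pow_mul_eq_add_pow, mul_sum]
  · refine sum_congr rfl fun u hu => ?_
    rw [card_union_of_disjoint (disj hu).symm, pow_add, mul_assoc, card_sdiff_of_subset h,
      Nat.sub_add_eq]
  · have := congrArg (· \ s) huv
    simp only [union_sdiff_left] at this
    rwa [(disj hu).sdiff_eq_left, (disj hv).sdiff_eq_left] at this

theorem SimpleGraph.card_edgeFinset_top_inter_sym2 {V : Type*} [Fintype V] [DecidableEq V]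
    (T : Finset V) : #((⊤ : SimpleGraph V).edgeFinset ∩ T.sym2) = (#T).choose 2 := by
  have := congrArg card (map_edgeFinset_induce (G := ⊤) (s := (T : Set V)))
  rw [card_map, toFinset_coe] at this
  rw [← this]
  convert card_edgeFinset_top_eq_card_choose_two (V := (T : Set V)) using 3
  · exact induce_top _
  · simp

theorem SimpleGraph.edgeSet_fromEdgeSet_of_subset {V : Type*} [Fintype V] [DecidableEq V]
    {F : Finset (Sym2 V)} (hF : F ⊆ (⊤ : SimpleGraph V).edgeFinset) :
    (fromEdgeSet (F : Set (Sym2 V))).edgeSet = F :=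
  (edgeSet_eq_iff _ _).2
    ⟨rfl, Set.disjoint_left.2 fun _ he => not_isDiag_of_mem_edgeFinset (hF he)⟩

section ErdosRenyi

variable {n : ℕ} {p : ℝ}

theorem erProb_le_sum_of_subset_biUnion (hp0 : 0 ≤ p) (hp1 : p ≤ 1)
    {A : Set (SimpleGraph (Fin n))} {ι : Type*} (I : Finset ι)
    (B : ι → Set (SimpleGraph (Fin n))) (hA : A ⊆ ⋃ i ∈ I, B i) :
    erProb n p A ≤ ∑ i ∈ I, erProb n p (B i) := by
  unfold erProb
  rw [sum_comm]
  refine sum_le_sum fun G _ => ?_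
  set w := fun G : SimpleGraph (Fin n) =>
    p ^ G.edgeSet.ncard * (1 - p) ^ (n.choose 2 - G.edgeSet.ncard)
  have hw : 0 ≤ w := fun G => mul_nonneg (pow_nonneg hp0 _) (pow_nonneg (sub_nonneg.2 hp1) _)
  by_cases hG : G ∈ A
  · obtain ⟨i, hi, hGi⟩ := Set.mem_iUnion₂.1 (hA hG)
    rw [Set.indicator_of_mem hG, ← Set.indicator_of_mem hGi w]
    exact single_le_sum (fun j _ => Set.indicator_nonneg (fun G _ => hw G) G) hi
  · rw [Set.indicator_of_notMem hG]
    exact sum_nonneg fun j _ => Set.indicator_nonneg (fun G _ => hw G) G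

theorem erProb_setOf_subset_edgeSet {S : Finset (Sym2 (Fin n))}
    (hS : S ⊆ (⊤ : SimpleGraph (Fin n)).edgeFinset) :
    erProb n p {G | ↑S ⊆ G.edgeSet} = p ^ #S := by
  classical
  set K := (⊤ : SimpleGraph (Fin n)).edgeFinset
  have hK : n.choose 2 = #K := by rw [card_edgeFinset_top_eq_card_choose_two, Fintype.card_fin]
  calc erProb n p {G | ↑S ⊆ G.edgeSet}
      = ∑ G : SimpleGraph (Fin n) with S ⊆ G.edgeFinset,
          p ^ #G.edgeFinset * (1 - p) ^ (#K - #G.edgeFinset) := by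
        rw [erProb, sum_filter]
        refine sum_congr rfl fun G _ => ?_
        simp only [Set.indicator_apply, Set.mem_ofPred_eq, ← coe_edgeFinset, coe_subset,
          Set.ncard_coe_finset, hK]
    _ = ∑ F ∈ Icc S K, p ^ #F * (1 - p) ^ (#K - #F) := by
        refine sum_nbij' (fun G => G.edgeFinset) (fun F => fromEdgeSet ↑F) ?_ ?_ ?_ ?_
          fun _ _ => rfl
        · intro G hG
          exact mem_Icc.2 ⟨(mem_filter.1 hG).2, edgeFinset_mono le_top⟩
        · intro F hF
          refine mem_filter.2 ⟨mem_univ _, ?_⟩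
          rw [← coe_subset, coe_edgeFinset, edgeSet_fromEdgeSet_of_subset (mem_Icc.1 hF).2]
          exact coe_subset.2 (mem_Icc.1 hF).1
        · intro G _
          simp [fromEdgeSet_edgeSet]
        · intro F hF
          exact coe_injective <| by
            rw [coe_edgeFinset, edgeSet_fromEdgeSet_of_subset (mem_Icc.1 hF).2]
    _ = p ^ #S := by simp [sum_Icc_pow_mul_pow hS]

theorem erProb_exists_le_ncard_edgeSet_induce_le (hp0 : 0 ≤ p) (hp1 : p ≤ 1) (t k : ℕ) :
    erProb n p {G | ∃ T : Set (Fin n), T.ncard = t ∧ k ≤ (G.induce T).edgeSet.ncard}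
      ≤ n.choose t * (t.choose 2).choose k * p ^ k := by
  classical
  set K := (⊤ : SimpleGraph (Fin n)).edgeFinset
  set I := (univ.powersetCard t).sigma fun T : Finset (Fin n) => (K ∩ T.sym2).powersetCard k
  have hcover : {G : SimpleGraph (Fin n) |
      ∃ T : Set (Fin n), T.ncard = t ∧ k ≤ (G.induce T).edgeSet.ncard} ⊆
      ⋃ i ∈ I, {G : SimpleGraph (Fin n) | ↑i.2 ⊆ G.edgeSet} := by
    rintro G ⟨T, hT, hk⟩
    have hcard : (G.induce T).edgeSet.ncard = #(G.edgeFinset ∩ T.toFinset.sym2) := by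
      rw [← map_edgeFinset_induce, card_map, ← coe_edgeFinset, Set.ncard_coe_finset]
    obtain ⟨S, hS, rfl⟩ := exists_subset_card_eq (hk.trans hcard.le)
    refine Set.mem_iUnion₂.2 ⟨⟨T.toFinset, S⟩, mem_sigma.2 ⟨?_, ?_⟩, ?_⟩
    · rw [mem_powersetCard_univ, ← hT, Set.ncard_eq_toFinset_card']
    · exact mem_powersetCard.2
        ⟨hS.trans (inter_subset_inter_right (edgeFinset_mono le_top)), rfl⟩
    · exact (coe_subset.2 (hS.trans inter_subset_left)).trans (coe_edgeFinset G).le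
  calc _ ≤ ∑ i ∈ I, erProb n p {G | ↑i.2 ⊆ G.edgeSet} :=
        erProb_le_sum_of_subset_biUnion hp0 hp1 I _ hcover
    _ = ∑ i ∈ I, p ^ k := sum_congr rfl fun i hi => by
        obtain ⟨hiK, rfl⟩ := mem_powersetCard.1 (mem_sigma.1 hi).2
        exact erProb_setOf_subset_edgeSet (hiK.trans inter_subset_left)
    _ = n.choose t * (t.choose 2).choose k * p ^ k := by
        rw [sum_const, nsmul_eq_mul, card_sigma, sum_congr rfl fun T hT => by
          rw [card_powersetCard, card_edgeFinset_top_inter_sym2, (mem_powersetCard_univ.1 hT)]]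
        simp [card_powersetCard]

end ErdosRenyi

theorem Nat.choose_le_exp_one_mul_div_pow (n k : ℕ) :
    (n.choose k : ℝ) ≤ (exp 1 * n / k) ^ k := by
  rcases k.eq_zero_or_pos with rfl | hk
  · simp
  have hk' : (0 : ℝ) < k := by exact_mod_cast hk
  calc (n.choose k : ℝ) ≤ n ^ k / k.factorial := Nat.choose_le_pow_div k n
    _ = (n / k) ^ k * (k ^ k / k.factorial) := by rw [div_pow]; field_simp
    _ ≤ (n / k) ^ k * exp k := by gcongr; exact Real.pow_div_factorial_le_exp _ hk'.le k
    _ = (exp 1 * n / k) ^ k := by rw [← exp_one_pow]; ring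

theorem choose_mul_choose_mul_pow_le_exp {c : ℝ} (hc : 0 < c) {n t k : ℕ} (hn : 0 < n)
    (ht : 0 < t) (htk : t ≤ k) :
    (n.choose t : ℝ) * (t.choose 2).choose k * (c / n) ^ k
      ≤ exp (t * (1 + log (n / t)) + k * (1 + log c - log (n / t))) := by
  have hn' : (0 : ℝ) < n := by exact_mod_cast hn
  have ht' : (0 : ℝ) < t := by exact_mod_cast ht
  have hk' : (0 : ℝ) < k := by exact_mod_cast ht.trans_le htk
  have hpairs : ((t.choose 2 : ℕ) : ℝ) ≤ t * k := by
    calc ((t.choose 2 : ℕ) : ℝ) ≤ t ^ 2 := by exact_mod_cast Nat.choose_le_pow t 2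
      _ ≤ t * k := by rw [sq]; gcongr
  calc (n.choose t : ℝ) * (t.choose 2).choose k * (c / n) ^ k
      ≤ (exp 1 * n / t) ^ t * ((exp 1 * (t.choose 2 : ℕ) / k) ^ k * (c / n) ^ k) := by
        rw [mul_assoc]
        gcongr
        · exact Nat.choose_le_exp_one_mul_div_pow n t
        · exact Nat.choose_le_exp_one_mul_div_pow _ k
    _ ≤ (exp 1 * n / t) ^ t * (exp 1 * c * t / n) ^ k := by
        rw [← mul_pow]
        gcongr
        rw [div_mul_div_comm, div_le_div_iff₀ (by positivity) hn']
        linear_combination (exp 1 * c * n) * hpairs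
    _ = exp (t * (1 + log (n / t)) + k * (1 + log c - log (n / t))) := by
        rw [exp_add, exp_nat_mul, exp_nat_mul, exp_add, exp_sub, exp_add, exp_log hc,
          exp_log (by positivity)]
        field_simp


/-- The first term makes `e c t / n ≤ 1`; the second lets the `-(ε / 4) t L` gained from the
surplus edges absorb the remaining linear terms with `(ε / 8) t L` to spare. -/
noncomputable def logThreshold (c ε : ℝ) : ℝ :=
  max (1 + log c) (8 / ε * (2 + ε / 4 + (1 + ε / 4) * log c))

theorem exponent_le_of_logThreshold_le {c ε t k L : ℝ} (hε : 0 < ε) (ht : 0 ≤ t)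
    (hk : (1 + ε / 4) * t ≤ k) (hL : logThreshold c ε ≤ L) :
    t * (1 + L) + k * (1 + log c - L) ≤ -(ε * t * L) / 8 := by
  obtain ⟨hL₁, hL₂⟩ := max_le_iff.1 hL
  have hdecay : k * (1 + log c - L) ≤ (1 + ε / 4) * t * (1 + log c - L) :=
    mul_le_mul_of_nonpos_right hk (by linarith)
  have hgain : 2 + ε / 4 + (1 + ε / 4) * log c ≤ ε / 8 * L :=
    calc 2 + ε / 4 + (1 + ε / 4) * log c
        = ε / 8 * (8 / ε * (2 + ε / 4 + (1 + ε / 4) * log c)) := by field_simp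
      _ ≤ ε / 8 * L := by gcongr
  linear_combination hdecay + t * hgain

/-- For every `c > 0` and `ε > 0` there exists `δ > 0` such that for all
sufficiently large `n` and every integer `t` with `1 ≤ t ≤ δ n`, the probability that
`G ∈ 𝒢(n, c/n)` contains a vertex set `T` with `|T| = t` spanning at least `(1 + ε/4)t`
edges is at most `exp(-ε t log(n/t) / 8)`. -/
theorem er_dense_set_probability (c ε : ℝ) (hc : 0 < c) (hε : 0 < ε) :
    ∃ δ > (0 : ℝ), ∀ᶠ n : ℕ in atTop, ∀ t : ℕ, 1 ≤ t → (t : ℝ) ≤ δ * n →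
      erProb n (c / n) {G | ∃ T : Set (Fin n), T.ncard = t ∧
          (1 + ε / 4) * t ≤ ((G.induce T).edgeSet.ncard : ℝ)}
        ≤ Real.exp (-(ε * t * Real.log (n / t)) / 8) := by
  refine ⟨exp (-logThreshold c ε), exp_pos _, ?_⟩
  filter_upwards [tendsto_natCast_atTop_atTop.eventually_ge_atTop c] with n hcn t ht htn
  have ht' : (0 : ℝ) < t := by exact_mod_cast ht
  have hn : (0 : ℝ) < n := pos_of_mul_pos_right (ht'.trans_le htn) (exp_pos _).le
  have hL : logThreshold c ε ≤ log (n / t) := by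
    rwa [le_log_iff_exp_le (by positivity), le_div_iff₀ ht', ← le_div_iff₀' (exp_pos _),
      div_eq_inv_mul, ← exp_neg]
  set k := ⌈(1 + ε / 4) * t⌉₊
  have hk : (1 + ε / 4) * t ≤ k := Nat.le_ceil _
  have htk : t ≤ k := by exact_mod_cast (le_mul_of_one_le_left ht'.le (by linarith)).trans hk
  have hevent : {G : SimpleGraph (Fin n) | ∃ T : Set (Fin n), T.ncard = t ∧
      (1 + ε / 4) * t ≤ ((G.induce T).edgeSet.ncard : ℝ)}
      = {G | ∃ T : Set (Fin n), T.ncard = t ∧ k ≤ (G.induce T).edgeSet.ncard} := by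
    simp only [k, Nat.ceil_le]
  rw [hevent]
  calc _ ≤ n.choose t * (t.choose 2).choose k * (c / n) ^ k :=
        erProb_exists_le_ncard_edgeSet_induce_le (by positivity) (div_le_one_of_le₀ hcn hn.le)
          t k
    _ ≤ exp (t * (1 + log (n / t)) + k * (1 + log c - log (n / t))) :=
        choose_mul_choose_mul_pow_le_exp hc (by exact_mod_cast hn) ht htk
    _ ≤ exp (-(ε * t * log (n / t)) / 8) :=
        exp_le_exp.2 (exponent_le_of_logThreshold_le hε ht'.le hk hL)
end
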